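/- Suppose F₁(τ) and F₂(τ) are smooth functions on ℍ, both transforming with weight 2 under SL₂(ℤ) (F_i(γτ) = (cτ+d)² F_i(τ)), both 1-periodic, and such that their difference D(τ) = F₁(τ) - F₂(τ) satisfies |D(x+iy)| ≤ M e^{-2πy} for all y > 0 (uniformly in x) on the fundamental domain, extended by modularity. Then for h ≥ 1, |∫₀¹ D(x + i/h) e^{-2πih(x + i/h)} dx| ≤ C·h for a constant C independent of h. -/

import Mathlib

open Complex Real MatrixGroups

lemma aux_exp_mul_le (t : ℝ) (ht : 0 ≤ t) : Real.exp (-(2 * π * t)) * t ≤ 1 := by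
  rw [Real.exp_neg, inv_mul_le_iff₀ (Real.exp_pos _), mul_one]
  have h1 : t ≤ Real.exp t := (Real.add_one_le_exp t).trans' (by linarith)
  have h2 : Real.exp t ≤ Real.exp (2 * π * t) :=
    Real.exp_le_exp.mpr (by nlinarith [Real.pi_gt_three])
  linarith

/-- Extension of the fundamental-domain bound to the closed fundamental domain,
by continuity. -/
lemma aux_closure (D : ℂ → ℂ) (M : ℝ)
    (hc : ContinuousOn D {z : ℂ | 0 < z.im})
    (hD : ∀ τ : ℂ, 0 < τ.im → (1 < ‖τ‖ ∧ -(1/2) ≤ τ.re ∧ τ.re < 1/2) →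
      ‖D τ‖ ≤ M * Real.exp (-(2 * π * τ.im)))
    (τ : ℂ) (him : 0 < τ.im) (h1 : 1 ≤ Complex.normSq τ) (h2 : |τ.re| ≤ 1/2) :
    ‖D τ‖ ≤ M * Real.exp (-(2 * π * τ.im)) := by
  have hre : -(1/2) ≤ τ.re ∧ τ.re ≤ 1/2 := abs_le.mp h2
  have hns : τ.re ^ 2 + τ.im ^ 2 ≥ 1 := by
    have := h1; rw [Complex.normSq_apply] at this; nlinarith
  have himhalf : 1/2 < τ.im := by nlinarith
  set c : ℂ := Complex.I - ((τ.re + 1/2 : ℝ) : ℂ) with hc_def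
  set f : ℕ → ℂ := fun n => τ + ((1/(n+1 : ℝ) : ℝ) : ℂ) * c with hf_def
  have hre_n : ∀ n : ℕ, (f n).re = τ.re - (1/(n+1:ℝ)) * (τ.re + 1/2) := by
    intro n
    simp only [hf_def, hc_def, Complex.add_re, Complex.re_ofReal_mul, Complex.sub_re,
      Complex.I_re, Complex.ofReal_re]
    ring
  have him_n : ∀ n : ℕ, (f n).im = τ.im + 1/(n+1:ℝ) := by
    intro n
    simp only [hf_def, hc_def, Complex.add_im, Complex.im_ofReal_mul, Complex.sub_im,
      Complex.I_im, Complex.ofReal_im]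
    ring
  have ht : ∀ n : ℕ, 0 < 1/(n+1:ℝ) ∧ 1/(n+1:ℝ) ≤ 1 := by
    intro n
    constructor
    · positivity
    · rw [div_le_one (by positivity)]; linarith [Nat.cast_nonneg (α := ℝ) n]
  have key : ∀ n : ℕ, ‖D (f n)‖ ≤ M * Real.exp (-(2 * π * (f n).im)) := by
    intro n
    obtain ⟨ht0, ht1⟩ := ht n
    set t := 1/(n+1:ℝ) with htdef
    have him' : 0 < (f n).im := by rw [him_n]; linarith
    apply hD _ him'
    have haux : τ.re * (τ.re + 1/2) ≤ 1/2 := by nlinarith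
    have haux2 : t * (τ.re * (τ.re + 1/2)) ≤ t * (1/2) :=
      mul_le_mul_of_nonneg_left haux ht0.le
    have hbt : t * (1/2) < t * τ.im := mul_lt_mul_of_pos_left himhalf ht0
    refine ⟨?_, ?_, ?_⟩
    · rw [Complex.norm_def, show (1:ℝ) = Real.sqrt 1 from (Real.sqrt_one).symm]
      apply Real.sqrt_lt_sqrt (by norm_num)
      rw [Complex.normSq_apply, hre_n, him_n, ← htdef]
      nlinarith [sq_nonneg (t * (τ.re + 1/2)), sq_nonneg t]
    · rw [hre_n]; nlinarith
    · rw [hre_n]; nlinarith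
  have htend : Filter.Tendsto f Filter.atTop (nhds τ) := by
    have h0 : Filter.Tendsto (fun n : ℕ => (1/(n+1:ℝ))) Filter.atTop (nhds 0) :=
      tendsto_one_div_add_atTop_nhds_zero_nat
    have h1 : Filter.Tendsto f Filter.atTop (nhds (τ + ((0:ℝ):ℂ) * c)) := by
      rw [hf_def]
      exact Filter.Tendsto.const_add _
        (Filter.Tendsto.mul ((Complex.continuous_ofReal.tendsto 0).comp h0) tendsto_const_nhds)
    simpa only [Complex.ofReal_zero, zero_mul, add_zero] using h1
  have hDcont : ContinuousAt D τ :=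
    hc.continuousAt ((isOpen_lt continuous_const Complex.continuous_im).mem_nhds him)
  refine le_of_tendsto_of_tendsto' ((hDcont.tendsto.comp htend).norm) ?_ key
  exact Filter.Tendsto.const_mul M ((Real.continuous_exp.tendsto _).comp
    ((((continuous_const.mul Complex.continuous_im).neg).tendsto τ).comp htend))

/-- A weight-2 invariant function bounded by `M e^{-2π Im τ}` on the closed fundamental
domain satisfies `‖D τ‖ · Im τ ≤ M` everywhere on the upper half-plane. -/
lemma aux_invariant (D : ℂ → ℂ) (M : ℝ) (hM : 0 ≤ M)
    (hclosure : ∀ τ : ℂ, 0 < τ.im → 1 ≤ Complex.normSq τ → |τ.re| ≤ 1/2 →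
      ‖D τ‖ ≤ M * Real.exp (-(2 * π * τ.im)))
    (hmodD : ∀ γ : SL(2, ℤ), ∀ τ : ℂ, 0 < τ.im →
      D ((((γ 0 0 : ℤ) : ℂ) * τ + ((γ 0 1 : ℤ) : ℂ)) /
            (((γ 1 0 : ℤ) : ℂ) * τ + ((γ 1 1 : ℤ) : ℂ)))
          = (((γ 1 0 : ℤ) : ℂ) * τ + ((γ 1 1 : ℤ) : ℂ)) ^ 2 * D τ)
    (τ : ℂ) (him : 0 < τ.im) : ‖D τ‖ * τ.im ≤ M := by
  set z : UpperHalfPlane := ⟨τ, him⟩ with hz_def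
  obtain ⟨γ, hγ⟩ := ModularGroup.exists_smul_mem_fd z
  set w : UpperHalfPlane := γ • z with hw_def
  set j : ℂ := ((γ 1 0 : ℤ) : ℂ) * τ + ((γ 1 1 : ℤ) : ℂ) with hj_def
  have hdenom : UpperHalfPlane.denom (Matrix.SpecialLinearGroup.toGL ((Matrix.SpecialLinearGroup.map (Int.castRingHom ℝ)) γ)) z = j := by
    rw [ModularGroup.denom_apply]
  have hjne : j ≠ 0 := by
    rw [← hdenom]; exact UpperHalfPlane.denom_ne_zero _ z
  have hcoe : (w : ℂ) = (((γ 0 0 : ℤ) : ℂ) * τ + ((γ 0 1 : ℤ) : ℂ)) / j := by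
    rw [hw_def, UpperHalfPlane.specialLinearGroup_apply]
    simp [hz_def, hj_def]
  have hwim : w.im = τ.im / Complex.normSq j := by
    rw [hw_def, ModularGroup.im_smul_eq_div_normSq, hdenom]
    rfl
  have hDw : D (w : ℂ) = j ^ 2 * D τ := by
    rw [hcoe]; exact hmodD γ τ him
  have hnormSqj : 0 < Complex.normSq j := Complex.normSq_pos.mpr hjne
  have habs : ‖j‖ ≠ 0 := norm_ne_zero_iff.mpr hjne
  have hinv : ‖D (w : ℂ)‖ * w.im = ‖D τ‖ * τ.im := by
    rw [hDw, hwim, norm_mul, norm_pow, Complex.normSq_eq_norm_sq]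
    field_simp
  have hwfd := hγ
  rw [ModularGroup.fd] at hwfd
  obtain ⟨hw1, hw2⟩ := hwfd
  have hbound := hclosure (w : ℂ) w.2 hw1 hw2
  calc ‖D τ‖ * τ.im = ‖D (w : ℂ)‖ * w.im := hinv.symm
    _ ≤ (M * Real.exp (-(2 * π * w.im))) * w.im :=
        mul_le_mul_of_nonneg_right hbound w.im_pos.le
    _ = M * (Real.exp (-(2 * π * w.im)) * w.im) := by ring
    _ ≤ M * 1 := mul_le_mul_of_nonneg_left (aux_exp_mul_le _ w.im_pos.le) hM
    _ = M := mul_one M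

/-- If `F₁, F₂` are smooth weight-2 modular, 1-periodic functions on `ℍ` whose
difference `D = F₁ - F₂` satisfies `|D(τ)| ≤ M e^{-2π Im τ}` on the fundamental domain
(extended by modularity), then the `h`-th Fourier coefficient of `D` at height `1/h`
is `O(h)`. -/
theorem smooth_weight_two_difference_coeff_bound (F₁ F₂ : ℂ → ℂ) (M : ℝ)
    (hsm₁ : ContDiffOn ℝ (⊤ : ℕ∞) F₁ {z : ℂ | 0 < z.im})
    (hsm₂ : ContDiffOn ℝ (⊤ : ℕ∞) F₂ {z : ℂ | 0 < z.im})
    (hmod : ∀ γ : SL(2, ℤ), ∀ τ : ℂ, 0 < τ.im →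
      F₁ ((((γ 0 0 : ℤ) : ℂ) * τ + ((γ 0 1 : ℤ) : ℂ)) /
            (((γ 1 0 : ℤ) : ℂ) * τ + ((γ 1 1 : ℤ) : ℂ)))
          = (((γ 1 0 : ℤ) : ℂ) * τ + ((γ 1 1 : ℤ) : ℂ)) ^ 2 * F₁ τ ∧
      F₂ ((((γ 0 0 : ℤ) : ℂ) * τ + ((γ 0 1 : ℤ) : ℂ)) /
            (((γ 1 0 : ℤ) : ℂ) * τ + ((γ 1 1 : ℤ) : ℂ)))
          = (((γ 1 0 : ℤ) : ℂ) * τ + ((γ 1 1 : ℤ) : ℂ)) ^ 2 * F₂ τ)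
    (hper : ∀ τ : ℂ, 0 < τ.im → F₁ (τ + 1) = F₁ τ ∧ F₂ (τ + 1) = F₂ τ)
    (hD : ∀ τ : ℂ, 0 < τ.im →
      (1 < ‖τ‖ ∧ -(1/2) ≤ τ.re ∧ τ.re < 1/2) →
      ‖F₁ τ - F₂ τ‖ ≤ M * Real.exp (-(2 * π * τ.im))) :
    ∃ C : ℝ, ∀ h : ℕ, 1 ≤ h →
      ‖∫ x in (0:ℝ)..1, (F₁ (x + I / h) - F₂ (x + I / h)) *
          Complex.exp (-(2 * π * I * h * (x + I / h)))‖ ≤ C * h := by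
  -- `M` is nonnegative
  have hM : 0 ≤ M := by
    have h2I := hD (2 * I) (by simp) ⟨by simp, by simp, by norm_num⟩
    nlinarith [norm_nonneg (F₁ (2 * I) - F₂ (2 * I)),
      Real.exp_pos (-(2 * π * (2 * I).im))]
  set D : ℂ → ℂ := fun τ => F₁ τ - F₂ τ with hD_def
  have hc : ContinuousOn D {z : ℂ | 0 < z.im} :=
    (hsm₁.continuousOn).sub (hsm₂.continuousOn)
  have hmodD : ∀ γ : SL(2, ℤ), ∀ τ : ℂ, 0 < τ.im →
      D ((((γ 0 0 : ℤ) : ℂ) * τ + ((γ 0 1 : ℤ) : ℂ)) /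
            (((γ 1 0 : ℤ) : ℂ) * τ + ((γ 1 1 : ℤ) : ℂ)))
          = (((γ 1 0 : ℤ) : ℂ) * τ + ((γ 1 1 : ℤ) : ℂ)) ^ 2 * D τ := by
    intro γ τ him
    obtain ⟨e1, e2⟩ := hmod γ τ him
    simp only [hD_def, e1, e2]
    ring
  have hclosure := aux_closure D M hc hD
  have key : ∀ τ : ℂ, 0 < τ.im → ‖D τ‖ * τ.im ≤ M :=
    aux_invariant D M hM hclosure hmodD
  refine ⟨M * Real.exp (2 * π), fun h hh => ?_⟩
  have hh0 : (0:ℝ) < h := by exact_mod_cast hh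
  have hbound : ∀ x ∈ Set.uIoc (0:ℝ) 1,
      ‖(F₁ (x + I / h) - F₂ (x + I / h)) *
        Complex.exp (-(2 * π * I * h * (x + I / h)))‖ ≤ (M * Real.exp (2 * π)) * h := by
    intro x _
    set τ : ℂ := x + I / h with hτ_def
    have hIh : (I : ℂ) / (h:ℂ) = (((h:ℝ)⁻¹ : ℝ) : ℂ) * I := by
      rw [Complex.ofReal_inv]; push_cast; ring
    have him : τ.im = (h:ℝ)⁻¹ := by
      rw [hτ_def, hIh]
      simp
    have him' : 0 < τ.im := by rw [him]; positivity
    have hD1 : ‖F₁ τ - F₂ τ‖ ≤ M * h := by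
      have := key τ him'
      rw [him] at this
      calc ‖F₁ τ - F₂ τ‖ = (‖F₁ τ - F₂ τ‖ * (h:ℝ)⁻¹) * h := by field_simp
        _ ≤ M * h := mul_le_mul_of_nonneg_right this hh0.le
    have hexp : ‖Complex.exp (-(2 * ↑π * I * ↑h * τ))‖ = Real.exp (2 * π) := by
      rw [Complex.norm_exp]
      congr 1
      have : (-(2 * (π:ℂ) * I * (h:ℂ) * τ)) = (((2 * π * h : ℝ)) : ℂ) * (-(I * τ)) := by
        push_cast; ring
      rw [this, Complex.re_ofReal_mul]
      simp only [Complex.neg_re, Complex.mul_re, Complex.I_re, Complex.I_im, zero_mul, one_mul,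
        zero_sub, neg_neg]
      rw [him]
      field_simp
    rw [norm_mul, hexp]
    calc ‖F₁ τ - F₂ τ‖ * Real.exp (2 * π) ≤ (M * h) * Real.exp (2 * π) :=
        mul_le_mul_of_nonneg_right hD1 (Real.exp_pos _).le
      _ = (M * Real.exp (2 * π)) * h := by ring
  have := intervalIntegral.norm_integral_le_of_norm_le_const hbound
  simpa using this
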